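/- Let N ≥ 1, let I be a finite index set, and for each i ∈ I let a_i > 0, b_i > 0, c_i > 0 be constants and n(i) ∈ {1,…,N} a coordinate index. Then the function F : ℝ^N → ℝ defined on the nonnegative orthant by F(p) = ∑_{i∈I} log(1 + a_i/(b_i + c_i · p_{n(i)})) is convex on {p ∈ ℝ^N : p_n ≥ 0 for all n}. -/

import Mathlib

/-!
Each summand depends on `p` only through the affine form `t = b + c * p (n i)`, which is positive on
the orthant, and `t ↦ log (1 + a / t) = log (t + a) - log t` is convex for `t > 0`: its second
derivative `1 / t ^ 2 - 1 / (t + a) ^ 2` is nonnegative. Convexity survives affine substitution and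
finite sums.
-/

open Set Real

theorem ConvexOn.finset_sum {𝕜 E β ι : Type*} [Semiring 𝕜] [PartialOrder 𝕜] [AddCommMonoid E]
    [AddCommMonoid β] [PartialOrder β] [IsOrderedAddMonoid β] [SMul 𝕜 E] [Module 𝕜 β]
    {s : Set E} {t : Finset ι} {f : ι → E → β} (hs : Convex 𝕜 s)
    (hf : ∀ i ∈ t, ConvexOn 𝕜 s (f i)) :
    ConvexOn 𝕜 s fun x => ∑ i ∈ t, f i x := by
  have := Finset.sum_induction f (ConvexOn 𝕜 s) (fun _ _ => ConvexOn.add) (convexOn_const 0 hs) hf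
  rwa [Finset.sum_fn] at this

theorem convexOn_log_one_add_div {a : ℝ} (ha : 0 ≤ a) :
    ConvexOn ℝ (Ioi 0) fun x => log (1 + a / x) := by
  have hderiv : ∀ x ∈ Ioi (0 : ℝ),
      HasDerivAt (fun x => log (x + a) - log x) ((x + a)⁻¹ - x⁻¹) x := fun x (hx : 0 < x) =>
    (((hasDerivAt_id x).add_const a).log (by positivity)).sub ((hasDerivAt_id x).log hx.ne')
      |>.congr_deriv (by simp [div_eq_inv_mul])
  have hderiv2 : ∀ x ∈ Ioi (0 : ℝ),
      HasDerivAt (fun x => (x + a)⁻¹ - x⁻¹) (-((x + a) ^ 2)⁻¹ + (x ^ 2)⁻¹) x := fun x (hx : 0 < x) =>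
    (((hasDerivAt_id x).add_const a).inv (by positivity)).sub ((hasDerivAt_id x).inv hx.ne')
      |>.congr_deriv (by simp only [id]; ring)
  have hconvex : ConvexOn ℝ (Ioi 0) fun x => log (x + a) - log x := by
    refine convexOn_of_hasDerivWithinAt2_nonneg (convex_Ioi 0)
      (fun x hx => (hderiv x hx).continuousAt.continuousWithinAt)
      (fun x hx => (hderiv x (interior_subset hx)).hasDerivWithinAt)
      (fun x hx => (hderiv2 x (interior_subset hx)).hasDerivWithinAt) fun x hx => ?_
    have hx : 0 < x := interior_subset hx
    have : ((x + a) ^ 2)⁻¹ ≤ (x ^ 2)⁻¹ :=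
      inv_anti₀ (by positivity) (pow_le_pow_left₀ hx.le (by linarith) 2)
    linarith
  refine hconvex.congr fun x (hx : 0 < x) => ?_
  show log (x + a) - log x = _
  rw [← log_div (by positivity) hx.ne', add_div, div_self hx.ne', add_comm]

theorem convexOn_log_one_add_div_add_mul_apply {ι : Type*} {a b c : ℝ} (ha : 0 ≤ a) (hb : 0 < b)
    (hc : 0 ≤ c) (m : ι) :
    ConvexOn ℝ {p : ι → ℝ | ∀ j, 0 ≤ p j} fun p => log (1 + a / (b + c * p m)) := by
  let g : (ι → ℝ) →ᵃ[ℝ] ℝ :=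
    AffineMap.const ℝ _ b + (c • LinearMap.proj (R := ℝ) (φ := fun _ : ι => ℝ) m).toAffineMap
  exact ((convexOn_log_one_add_div ha).comp_affineMap g).subset
    (fun p (hp : ∀ j, 0 ≤ p j) => show 0 < b + c * p m by have := hp m; positivity) (convex_Ici 0)

theorem sum_interfered_rates_convexOn_general (N : ℕ)
    {I : Type*} [Fintype I]
    (a b c : I → ℝ) (ha : ∀ i, 0 < a i) (hb : ∀ i, 0 < b i) (hc : ∀ i, 0 < c i)
    (n : I → Fin N) :
    ConvexOn ℝ {p : Fin N → ℝ | ∀ m, 0 ≤ p m}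
      (fun p : Fin N → ℝ =>
        ∑ i, Real.log (1 + a i / (b i + c i * p (n i)))) :=
  ConvexOn.finset_sum (convex_Ici 0) fun i _ =>
    convexOn_log_one_add_div_add_mul_apply (ha i).le (hb i) (hc i).le (n i)

/-- The sum of interfered rate terms, as a function of user k's power vector
p ∈ ℝ^N, is convex on the nonnegative orthant. -/
theorem sum_interfered_rates_convexOn (N : ℕ) (hN : 1 ≤ N)
    {I : Type*} [Fintype I]
    (a b c : I → ℝ) (ha : ∀ i, 0 < a i) (hb : ∀ i, 0 < b i) (hc : ∀ i, 0 < c i)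
    (n : I → Fin N) :
    ConvexOn ℝ {p : Fin N → ℝ | ∀ m, 0 ≤ p m}
      (fun p : Fin N → ℝ =>
        ∑ i, Real.log (1 + a i / (b i + c i * p (n i)))) :=
  sum_interfered_rates_convexOn_general N a b c ha hb hc n
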